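/- arXiv:1501.04079 — 3 statements merged into one kernel-verified Lean document; each statement's English description precedes it below -/
import Mathlib

section
/- Let Γ be a countable discrete group, (X,μ) a standard probability space, and K the Cantor set. For every ε > 0 there exists k ∈ ℕ such that for every measure-preserving action a of Γ on (X,μ) and every measurable φ: X → K there is a measurable ψ: X → K whose range has size at most k and such that δ_K((Φ^{φ,a})_*μ, (Φ^{ψ,a})_*μ) < ε. The integer k depends only on ε, not on a or φ. -/
open MeasureTheory Filter Topology Set

/-- A measure-preserving action of a group `Γ` on a measure space `(X, μ)`. -/
structure MPAction (Γ : Type*) [Group Γ] (X : Type*) [MeasurableSpace X]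
    (μ : MeasureTheory.Measure X) where
  act : Γ → X → X
  measurePreserving_act : ∀ γ : Γ, MeasureTheory.MeasurePreserving (act γ) μ μ
  act_one : ∀ x, act 1 x = x
  act_mul : ∀ γ δ x, act (γ * δ) x = act γ (act δ x)

namespace MPAction

variable {Γ : Type*} [Group Γ] {X : Type*} [MeasurableSpace X] {μ : Measure X}
  {Y : Type*} [MeasurableSpace Y] {ν : Measure Y}
  {W : Type*} [MeasurableSpace W] {ρ : Measure W}

/-- Weak containment of measure-preserving actions. -/
def WeaklyContained (a : MPAction Γ X μ) (b : MPAction Γ Y ν) : Prop :=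
  ∀ (n : ℕ) (A : Fin n → Set X), (∀ i, MeasurableSet (A i)) →
    ∀ (F : Finset Γ) (ε : ℝ), 0 < ε →
      ∃ B : Fin n → Set Y, (∀ i, MeasurableSet (B i)) ∧
        ∀ γ ∈ F, ∀ i j : Fin n,
          |(μ (a.act γ '' A i ∩ A j)).toReal - (ν (b.act γ '' B i ∩ B j)).toReal| < ε

/-- Weak equivalence of measure-preserving actions. -/
def WeakEquiv (a : MPAction Γ X μ) (b : MPAction Γ Y ν) : Prop :=
  WeaklyContained a b ∧ WeaklyContained b a

/-- A finite measurable partition of the space. -/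
def IsPartition {k : ℕ} (A : Fin k → Set X) : Prop :=
  (∀ i, MeasurableSet (A i)) ∧ Pairwise (Function.onFun Disjoint A) ∧ (⋃ i, A i) = Set.univ

/-- The compact set `C_{n,k}(a) ⊆ [0,1]^{n × k × k}`: the closure of the collection of
matrices of measures `μ(γ_p^a A_q ∩ A_r)` over all measurable `k`-partitions, with respect
to the fixed enumeration `e` of the group. -/
noncomputable def Cnk (e : ℕ → Γ) (a : MPAction Γ X μ) (n k : ℕ) :
    Set ((Fin n × Fin k × Fin k) → ℝ) :=
  closure { v | ∃ A : Fin k → Set X, IsPartition A ∧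
    ∀ (p : Fin n) (q r : Fin k), v (p, q, r) = (μ (a.act (e p.1) '' A q ∩ A r)).toReal }

/-- The metric `d` on weak equivalence classes:
`d(a,b) = Σ_{n,k} 2^{-(n+k)} d_H(C_{n,k}(a), C_{n,k}(b))`. -/
noncomputable def dWE (e : ℕ → Γ) (a : MPAction Γ X μ) (b : MPAction Γ Y ν) : ℝ :=
  ∑' nk : ℕ × ℕ, (2 : ℝ) ^ (-(nk.1 : ℤ) - (nk.2 : ℤ)) *
    Metric.hausdorffDist (Cnk e a nk.1 nk.2) (Cnk e b nk.1 nk.2)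

section Mix

variable {ι : Type*} {Z : ι → Type*} [∀ i, MeasurableSpace (Z i)]

theorem measurable_sigmaMk' (i : ι) : Measurable (@Sigma.mk ι Z i) :=
  measurable_iff_le_map.2 (iInf_le _ i)

theorem measurable_of_sigma {δ : Type*} [MeasurableSpace δ] {f : Sigma Z → δ}
    (hf : ∀ i, Measurable (f ∘ Sigma.mk i)) : Measurable f := by
  intro s hs
  rw [Sigma.instMeasurableSpace, MeasurableSpace.measurableSet_iInf]
  intro i
  exact hf i hs

/-- The measure `Σ_i λ_i ν_i` on the disjoint union `⊔_i Z_i`. -/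
noncomputable def mixMeasure (lam : ι → ℝ) (νs : ∀ i, Measure (Z i)) :
    Measure ((i : ι) × Z i) :=
  Measure.sum fun i => ENNReal.ofReal (lam i) • (νs i).map (Sigma.mk i)

instance mixMeasure.instSFinite [Countable ι] (lam : ι → ℝ) (νs : ∀ i, Measure (Z i))
    [∀ i, SFinite (νs i)] : SFinite (mixMeasure lam νs) := by
  unfold mixMeasure
  infer_instance

/-- The convex combination `Σ_i λ_i a_i` of measure-preserving actions, acting on the
disjoint union `⊔_i Z_i` with the measure `Σ_i λ_i ν_i`. -/
noncomputable def mix [Countable ι] {νs : ∀ i, Measure (Z i)} (lam : ι → ℝ)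
    (a : ∀ i, MPAction Γ (Z i) (νs i)) : MPAction Γ ((i : ι) × Z i) (mixMeasure lam νs) where
  act γ p := ⟨p.1, (a p.1).act γ p.2⟩
  measurePreserving_act γ := by
    have hmeas : Measurable fun p : (i : ι) × Z i => (⟨p.1, (a p.1).act γ p.2⟩ : (i : ι) × Z i) := by
      apply measurable_of_sigma
      intro i
      exact (measurable_sigmaMk' i).comp ((a i).measurePreserving_act γ).measurable
    refine ⟨hmeas, ?_⟩
    refine Measure.ext fun s hs => ?_
    rw [Measure.map_apply hmeas hs]
    rw [mixMeasure, Measure.sum_apply _ (hmeas hs), Measure.sum_apply _ hs]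
    congr 1
    funext i
    rw [Measure.smul_apply, Measure.smul_apply,
      Measure.map_apply (measurable_sigmaMk' i) (hmeas hs),
      Measure.map_apply (measurable_sigmaMk' i) hs]
    congr 1
    have hpre : (Sigma.mk i) ⁻¹'
        ((fun p : (i : ι) × Z i => (⟨p.1, (a p.1).act γ p.2⟩ : (i : ι) × Z i)) ⁻¹' s)
        = ((a i).act γ) ⁻¹' (Sigma.mk i ⁻¹' s) := rfl
    rw [hpre]
    exact ((a i).measurePreserving_act γ).measure_preimage
      ((measurable_sigmaMk' i) hs).nullMeasurableSet
  act_one p := by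
    cases p with
    | mk i x => simp only [(a i).act_one]
  act_mul γ δ p := by
    cases p with
    | mk i x => simp only [(a i).act_mul]

end Mix

/-- The binary convex combination `t a + (1 - t) b` of two actions on `(X, μ)`,
realized on the disjoint union of two copies of `X` carrying measures `tμ` and `(1-t)μ`. -/
noncomputable def convComb (t : ℝ) (a b : MPAction Γ X μ) :
    MPAction Γ ((_ : Fin 2) × X) (mixMeasure ![t, 1 - t] fun _ => μ) :=
  mix (νs := fun _ => μ) ![t, 1 - t] ![a, b]

/-- The trivial action. -/
def trivAction (Γ : Type*) [Group Γ] (Y : Type*) [MeasurableSpace Y] (ν : Measure Y) :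
    MPAction Γ Y ν where
  act _ y := y
  measurePreserving_act _ := MeasurePreserving.id ν
  act_one _ := rfl
  act_mul _ _ _ := rfl

/-- The product of two measure-preserving actions. -/
noncomputable def prodAction [SFinite μ] [SFinite ν] (a : MPAction Γ X μ) (b : MPAction Γ Y ν) :
    MPAction Γ (X × Y) (μ.prod ν) where
  act γ := Prod.map (a.act γ) (b.act γ)
  measurePreserving_act γ := (a.measurePreserving_act γ).prod (b.measurePreserving_act γ)
  act_one p := by simp [Prod.map, a.act_one, b.act_one]
  act_mul γ δ p := by simp [Prod.map, a.act_mul, b.act_mul]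

/-- Stable weak containment: `a ≺_s b` iff `a ≺ ι × b`, where `ι` is the trivial action of `Γ`
on the standard probability space `(X₀, μ₀)`. -/
def StableWeaklyContained {X₀ : Type*} [MeasurableSpace X₀] (μ₀ : Measure X₀) [SFinite μ₀]
    (a : MPAction Γ W ρ) (b : MPAction Γ Y ν) [SFinite ν] : Prop :=
  WeaklyContained a (prodAction (trivAction Γ X₀ μ₀) b)

/-- Stable weak equivalence. -/
def StableWeakEquiv {X₀ : Type*} [MeasurableSpace X₀] (μ₀ : Measure X₀) [SFinite μ₀]
    (a : MPAction Γ W ρ) [SFinite ρ] (b : MPAction Γ Y ν) [SFinite ν] : Prop :=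
  StableWeaklyContained μ₀ a b ∧ StableWeaklyContained μ₀ b a

/-- An action is ergodic if every strictly invariant measurable set is null or conull. -/
def IsErgodicAction (a : MPAction Γ X μ) : Prop :=
  ∀ A : Set X, MeasurableSet A → (∀ γ, a.act γ ⁻¹' A = A) → μ A = 0 ∨ μ Aᶜ = 0

/-- An action is (essentially) free if almost every point has trivial stabilizer. -/
def IsFreeAction (a : MPAction Γ X μ) : Prop :=
  ∀ᵐ x ∂μ, ∀ γ : Γ, γ ≠ 1 → a.act γ x ≠ x

end MPAction

section Cylinders

/-- The Cantor set. -/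
abbrev Cantor : Type := ℕ → Bool

/-- Basic clopen subsets of the Cantor set: sets determined by finitely many coordinates. -/
def cantorBasic : Set (Set Cantor) :=
  { B | ∃ (s : Finset ℕ) (σ : ℕ → Bool), B = {x : Cantor | ∀ n ∈ s, x n = σ n} }

/-- The clopen cylinder subsets of `K^Γ` of the form `π_F⁻¹(Π_{γ ∈ F} A_γ)` with `F ⊆ Γ`
finite and each `A_γ` a basic clopen subset of the Cantor set `K`. -/
def KCyl (Γ : Type*) : Set (Set (Γ → Cantor)) :=
  { C | ∃ (F : Finset Γ) (B : Γ → Set Cantor),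
      (∀ γ ∈ F, B γ ∈ cantorBasic) ∧ C = {f | ∀ γ ∈ F, f γ ∈ B γ} }

/-- The basic clopen cylinder subsets of `L^Γ` for a finite set `L`:
sets of the form `∩_{γ ∈ F} π_γ⁻¹({j_γ})`. -/
def LCyl (Γ : Type*) (L : Type*) : Set (Set (Γ → L)) :=
  { C | ∃ (F : Finset Γ) (j : Γ → L), C = {f | ∀ γ ∈ F, f γ = j γ} }

/-- `A` enumerates the collection of sets `S`. -/
def Enumerates {M : Type*} (A : ℕ → Set M) (S : Set (Set M)) : Prop :=
  (∀ i, A i ∈ S) ∧ ∀ C ∈ S, ∃ i, A i = C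

/-- The compatible metric `δ(ν,ρ) = Σ_i 2^{-(i+1)} |ν(A_i) - ρ(A_i)|` on the space of
probability measures, determined by an enumeration `A` of a generating family of sets. -/
noncomputable def deltaEnum {M : Type*} [MeasurableSpace M] (A : ℕ → Set M)
    (m m' : MeasureTheory.Measure M) : ℝ :=
  ∑' i : ℕ, (2 : ℝ) ^ (-(i : ℤ) - 1) * |(m (A i)).toReal - (m' (A i)).toReal|

/-- Convergence of a sequence of sets of measures to a set of measures in the Hausdorff
(metric) sense, with respect to a metric `δ`: for every `ε > 0`, eventually each of the two
sets is contained in the `ε`-neighbourhood of the other.  (Equivalently, the closures converge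
in the Hausdorff metric topology on the hyperspace of compact subsets.) -/
def HausTendsto {M : Type*} [MeasurableSpace M]
    (δ : MeasureTheory.Measure M → MeasureTheory.Measure M → ℝ)
    (En : ℕ → Set (MeasureTheory.Measure M)) (E : Set (MeasureTheory.Measure M)) : Prop :=
  ∀ ε : ℝ, 0 < ε → ∃ N : ℕ, ∀ n ≥ N,
    (∀ m ∈ En n, ∃ m' ∈ E, δ m m' < ε) ∧ (∀ m' ∈ E, ∃ m ∈ En n, δ m m' < ε)

variable {Γ : Type*} [Group Γ] {X : Type*} [MeasurableSpace X] {μ : MeasureTheory.Measure X}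

/-- The map `Φ^{φ,a} : X → S^Γ`, `Φ^{φ,a}(x)(γ) = φ((γ⁻¹)^a x)`, associated to an observable
`φ : X → S` and an action `a`. -/
def MPAction.phiMap (a : MPAction Γ X μ) {S : Type*} (φ : X → S) : X → (Γ → S) :=
  fun x γ => φ (a.act γ⁻¹ x)

/-- The set `E(a,S) = {(Φ^{φ,a})_* μ : φ : X → S measurable}` of shift-invariant measures
on `S^Γ` associated to the action `a`. -/
noncomputable def MPAction.ESet (a : MPAction Γ X μ) (S : Type*) [MeasurableSpace S] :
    Set (MeasureTheory.Measure (Γ → S)) :=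
  { m | ∃ φ : X → S, Measurable φ ∧ m = μ.map (a.phiMap φ) }

end Cylinders

/-!
Truncating every value of `φ` to its first `n` bits gives an observable `ψ` with at most `2 ^ n`
values. Each clopen cylinder only reads finitely many bits at finitely many coordinates, so for `n`
large the pushforwards of `μ` under `Φ^{φ,a}` and `Φ^{ψ,a}` agree on `A₀, …, A_{N-1}`, whatever `a`
and `φ` are. The remaining terms of `δ_K` sum to at most `2⁻¹ ^ N`.
-/

namespace Cantor

def truncate (n : ℕ) (x : Cantor) : Cantor := fun m => if m < n then x m else false

theorem truncate_of_lt {n m : ℕ} (x : Cantor) (h : m < n) : truncate n x m = x m := if_pos h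

theorem measurable_truncate (n : ℕ) : Measurable (truncate n) :=
  measurable_pi_lambda _ fun m => by
    by_cases h : m < n
    · simpa only [truncate, h, if_true] using measurable_pi_apply m
    · simpa only [truncate, h, if_false] using measurable_const

theorem range_truncate_subset (n : ℕ) :
    range (truncate n) ⊆ range fun (v : Fin n → Bool) (m : ℕ) =>
      if h : m < n then v ⟨m, h⟩ else false := by
  rintro _ ⟨x, rfl⟩
  exact ⟨fun i => x i, funext fun m => by by_cases h : m < n <;> simp [truncate, h]⟩

theorem finite_range_truncate (n : ℕ) : (range (truncate n)).Finite :=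
  (Set.finite_range _).subset (range_truncate_subset n)

theorem ncard_range_truncate_le (n : ℕ) : (range (truncate n)).ncard ≤ 2 ^ n := by
  refine (Set.ncard_le_ncard (range_truncate_subset n) (Set.finite_range _)).trans ?_
  rw [← Set.image_univ]
  refine (Set.ncard_image_le Set.finite_univ).trans_eq ?_
  simp [Set.ncard_univ]

end Cantor

theorem measurableSet_of_mem_cantorBasic {B : Set Cantor} (hB : B ∈ cantorBasic) :
    MeasurableSet B := by
  obtain ⟨s, σ, rfl⟩ := hB
  exact MeasurableSet.pi s.countable_toSet fun m _ => measurableSet_singleton (σ m)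

theorem eventually_truncate_mem_iff_of_mem_cantorBasic {B : Set Cantor} (hB : B ∈ cantorBasic) :
    ∀ᶠ n in atTop, ∀ x, Cantor.truncate n x ∈ B ↔ x ∈ B := by
  obtain ⟨s, σ, rfl⟩ := hB
  filter_upwards [eventually_gt_atTop (s.sup id)] with n hn x
  have hs : ∀ m ∈ s, m < n := fun m hm => (Finset.le_sup (f := id) hm).trans_lt hn
  refine forall₂_congr fun m hm => ?_
  rw [Cantor.truncate_of_lt x (hs m hm)]

theorem measurableSet_of_mem_KCyl {Γ : Type*} {C : Set (Γ → Cantor)} (hC : C ∈ KCyl Γ) :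
    MeasurableSet C := by
  obtain ⟨F, B, hB, rfl⟩ := hC
  exact MeasurableSet.pi F.countable_toSet fun γ hγ => measurableSet_of_mem_cantorBasic (hB γ hγ)

theorem eventually_truncate_mem_iff_of_mem_KCyl {Γ : Type*} {C : Set (Γ → Cantor)}
    (hC : C ∈ KCyl Γ) : ∀ᶠ n in atTop, ∀ f, Cantor.truncate n ∘ f ∈ C ↔ f ∈ C := by
  obtain ⟨F, B, hB, rfl⟩ := hC
  filter_upwards [F.eventually_all.2 fun γ hγ => eventually_truncate_mem_iff_of_mem_cantorBasic
    (hB γ hγ)] with n hn f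
  exact forall₂_congr fun γ hγ => hn γ hγ (f γ)

theorem deltaEnum_le_of_forall_lt_eq {M : Type*} [MeasurableSpace M] (A : ℕ → Set M)
    (m m' : Measure M) [IsZeroOrProbabilityMeasure m] [IsZeroOrProbabilityMeasure m'] {N : ℕ}
    (h : ∀ i < N, m (A i) = m' (A i)) : deltaEnum A m m' ≤ 2⁻¹ ^ N := by
  have hterm : ∀ i : ℕ, (2 : ℝ) ^ (-(i : ℤ) - 1) * |(m (A i)).toReal - (m' (A i)).toReal|
      ≤ 2⁻¹ * ite (N ≤ i) ((2 : ℝ)⁻¹ ^ i) 0 := by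
    intro i
    have hpow : (2 : ℝ) ^ (-(i : ℤ) - 1) = 2⁻¹ * 2⁻¹ ^ i := by
      rw [zpow_sub₀ two_ne_zero, zpow_neg, zpow_natCast, zpow_one, inv_pow, div_eq_mul_inv,
        mul_comm]
    split_ifs with hi
    · rw [hpow, mul_comm (2⁻¹ : ℝ)]
      exact mul_le_of_le_one_right (by positivity) (abs_sub_le_of_nonneg_of_le
        measureReal_nonneg measureReal_le_one measureReal_nonneg measureReal_le_one)
    · simp [h i (not_le.1 hi)]
  have hsummable : Summable fun i : ℕ => ite (N ≤ i) ((2 : ℝ)⁻¹ ^ i) 0 := by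
    simpa only [← piecewise_eq_indicator, one_div] using!
      summable_geometric_two.indicator {i | N ≤ i}
  calc deltaEnum A m m'
      ≤ ∑' i : ℕ, 2⁻¹ * ite (N ≤ i) ((2 : ℝ)⁻¹ ^ i) 0 :=
        Summable.tsum_le_tsum hterm
          ((hsummable.mul_left _).of_nonneg_of_le (fun i => by positivity) hterm)
          (hsummable.mul_left _)
    _ = 2⁻¹ ^ N := by rw [tsum_mul_left, tsum_geometric_inv_two_ge]; ring

theorem MPAction.measurable_phiMap {Γ : Type*} [Group Γ] {X : Type*} [MeasurableSpace X]
    {μ : Measure X} (a : MPAction Γ X μ) {S : Type*} [MeasurableSpace S] {φ : X → S}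
    (hφ : Measurable φ) : Measurable (a.phiMap φ) :=
  measurable_pi_lambda _ fun γ => hφ.comp (a.measurePreserving_act γ⁻¹).measurable

theorem finite_range_approximation_general
    (Γ : Type) [Group Γ]
    (X : Type) [MeasurableSpace X]
    (μ : Measure X) [IsProbabilityMeasure μ]
    (A : ℕ → Set (Γ → Cantor)) (hA : Enumerates A (KCyl Γ))
    (ε : ℝ) (hε : 0 < ε) :
    ∃ k : ℕ, ∀ (a : MPAction Γ X μ) (φ : X → Cantor), Measurable φ →
      ∃ ψ : X → Cantor, Measurable ψ ∧ (Set.range ψ).Finite ∧ (Set.range ψ).ncard ≤ k ∧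
        deltaEnum A (μ.map (a.phiMap φ)) (μ.map (a.phiMap ψ)) < ε := by
  obtain ⟨N, hN⟩ := exists_pow_lt_of_lt_one hε (by norm_num : (2⁻¹ : ℝ) < 1)
  obtain ⟨n, hn⟩ := ((Finset.range N).eventually_all.2 fun i _ =>
    eventually_truncate_mem_iff_of_mem_KCyl (hA.1 i)).exists
  refine ⟨2 ^ n, fun a φ hφ => ⟨Cantor.truncate n ∘ φ, (Cantor.measurable_truncate n).comp hφ,
    (Cantor.finite_range_truncate n).subset (range_comp_subset_range _ _),
    (Set.ncard_le_ncard (range_comp_subset_range _ _) (Cantor.finite_range_truncate n)).trans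
      (Cantor.ncard_range_truncate_le n), ?_⟩⟩
  have hφ' := a.measurable_phiMap hφ
  have hψ' := a.measurable_phiMap ((Cantor.measurable_truncate n).comp hφ)
  have := Measure.isProbabilityMeasure_map (μ := μ) hφ'.aemeasurable
  have := Measure.isProbabilityMeasure_map (μ := μ) hψ'.aemeasurable
  refine (deltaEnum_le_of_forall_lt_eq A _ _ fun i hi => ?_).trans_lt hN
  have hAi := measurableSet_of_mem_KCyl (hA.1 i)
  rw [Measure.map_apply hφ' hAi, Measure.map_apply hψ' hAi]
  exact congrArg μ (Set.ext fun x => (hn i (Finset.mem_range.2 hi) (a.phiMap φ x)).symm)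

/-- For every `ε > 0` there is `k ∈ ℕ`, depending only on `ε` (and the fixed
enumeration of the clopen cylinder sets defining the metric `δ_K`), such that for every
measure-preserving action `a` of `Γ` on `(X,μ)` and every measurable `φ : X → K` there is a
measurable `ψ : X → K` whose range has at most `k` elements with
`δ_K((Φ^{φ,a})_*μ, (Φ^{ψ,a})_*μ) < ε`. -/
theorem finite_range_approximation
    (Γ : Type) [Group Γ] [Countable Γ]
    (X : Type) [MeasurableSpace X] [StandardBorelSpace X]
    (μ : Measure X) [IsProbabilityMeasure μ] [NullSingletonClass μ]
    (A : ℕ → Set (Γ → Cantor)) (hA : Enumerates A (KCyl Γ))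
    (ε : ℝ) (hε : 0 < ε) :
    ∃ k : ℕ, ∀ (a : MPAction Γ X μ) (φ : X → Cantor), Measurable φ →
      ∃ ψ : X → Cantor, Measurable ψ ∧ (Set.range ψ).Finite ∧ (Set.range ψ).ncard ≤ k ∧
        deltaEnum A (μ.map (a.phiMap φ)) (μ.map (a.phiMap ψ)) < ε :=
  finite_range_approximation_general Γ X μ A hA ε hε
end

section
/- Let Γ be a countable discrete group, (X,μ) a standard probability space, K the Cantor set, and a_n, a measure-preserving actions of Γ on (X,μ). If for every finite set L the closures of E(a_n,L) converge to the closure of E(a,L) in the hyperspace of compact subsets of M_s(L^Γ) (with the Hausdorff metric), then the closures of E(a_n,K) converge to the closure of E(a,K) in the hyperspace of compact subsets of M_s(K^Γ). -/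
open MeasureTheory Filter Topology Set

/-! Given `ε > 0`, take `N` with `2⁻¹ ^ N < ε / 2`. The first `N` cylinders of `K^Γ` only see a
finite set `s` of coordinates of `K`, so after truncating `K` to `s`, a finite alphabet `L`, each
becomes the preimage of a set depending on finitely many coordinates of `L^Γ`. This gives
`δ_K(ν, ν') ≤ C δ_L(P ν, P ν') + 2⁻¹ ^ N` for the truncation `P`. As `P` has a measurable section,
pushing forward by `P` maps `E(c, K)` onto `E(c, L)` for every action `c`, and the Hausdorff
convergence over `L` transfers to `K`. -/

section DeltaEnum

variable {M : Type*} [MeasurableSpace M] (A : ℕ → Set M) (m m' : Measure M)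

lemma deltaEnum_nonneg : 0 ≤ deltaEnum A m m' :=
  tsum_nonneg fun _ => by positivity

variable [IsProbabilityMeasure m] [IsProbabilityMeasure m']

lemma abs_toReal_measure_sub_le_one (s : Set M) : |(m s).toReal - (m' s).toReal| ≤ 1 :=
  abs_sub_le_of_nonneg_of_le ENNReal.toReal_nonneg measureReal_le_one
    ENNReal.toReal_nonneg measureReal_le_one

lemma deltaEnum_term_le (i : ℕ) :
    (2 : ℝ) ^ (-(i : ℤ) - 1) * |(m (A i)).toReal - (m' (A i)).toReal| ≤ 1 / 2 / 2 ^ i := by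
  have hw : (2 : ℝ) ^ (-(i : ℤ) - 1) = 1 / 2 / 2 ^ i := by
    rw [zpow_sub₀ two_ne_zero, zpow_neg, zpow_natCast, zpow_one]
    ring
  rw [hw]
  exact mul_le_of_le_one_right (by positivity) (abs_toReal_measure_sub_le_one m m' _)

lemma summable_deltaEnum :
    Summable fun i : ℕ => (2 : ℝ) ^ (-(i : ℤ) - 1) * |(m (A i)).toReal - (m' (A i)).toReal| :=
  (summable_geometric_two' 1).of_nonneg_of_le (fun _ => by positivity) (deltaEnum_term_le A m m')

lemma abs_toReal_measure_sub_le_deltaEnum (k : ℕ) :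
    |(m (A k)).toReal - (m' (A k)).toReal| ≤ 2 ^ (k + 1) * deltaEnum A m m' := by
  have hk := (summable_deltaEnum A m m').le_tsum k fun i _ => by positivity
  have hw : (2 : ℝ) ^ (k + 1) * 2 ^ (-(k : ℤ) - 1) = 1 := by
    rw [← zpow_natCast, ← zpow_add₀ two_ne_zero]
    simp
  calc |(m (A k)).toReal - (m' (A k)).toReal|
      = 2 ^ (k + 1) * (2 ^ (-(k : ℤ) - 1) * |(m (A k)).toReal - (m' (A k)).toReal|) := by
        rw [← mul_assoc, hw, one_mul]
    _ ≤ 2 ^ (k + 1) * deltaEnum A m m' := by gcongr; exact hk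

lemma deltaEnum_le_sum_range_add (N : ℕ) :
    deltaEnum A m m' ≤ ∑ i ∈ Finset.range N, |(m (A i)).toReal - (m' (A i)).toReal| + 2⁻¹ ^ N := by
  rw [deltaEnum, ← (summable_deltaEnum A m m').sum_add_tsum_nat_add N]
  gcongr with i
  · refine mul_le_of_le_one_left (abs_nonneg _) (zpow_le_one_of_nonpos₀ one_le_two ?_)
    omega
  · calc ∑' k, (2 : ℝ) ^ (-((k + N : ℕ) : ℤ) - 1) *
          |(m (A (k + N))).toReal - (m' (A (k + N))).toReal|
        ≤ ∑' k : ℕ, 2⁻¹ ^ N / 2 / 2 ^ k :=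
          ((summable_nat_add_iff N).2 (summable_deltaEnum A m m')).tsum_le_tsum
            (fun k => (deltaEnum_term_le A m m' (k + N)).trans_eq
              (by rw [pow_add, inv_pow]; field_simp))
            (summable_geometric_two' _)
      _ = 2⁻¹ ^ N := tsum_geometric_two' _

end DeltaEnum

section LCyl

variable {Γ L : Type*}

lemma restrict_preimage_singleton_mem_LCyl [Nonempty L] (F : Finset Γ) (j : F → L) :
    (F.restrict : (Γ → L) → F → L) ⁻¹' {j} ∈ LCyl Γ L := by
  classical
  refine ⟨F, fun γ => if h : γ ∈ F then j ⟨γ, h⟩ else Classical.arbitrary L, ?_⟩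
  ext g
  simp only [Set.mem_preimage, Set.mem_singleton_iff, Set.mem_ofPred_eq, funext_iff,
    Finset.restrict, Subtype.forall]
  exact forall₂_congr fun γ hγ => by rw [dif_pos hγ]

lemma exists_enumerates_LCyl [Countable Γ] [Finite L] [Nonempty L] :
    ∃ AL : ℕ → Set (Γ → L), Enumerates AL (LCyl Γ L) := by
  have hcount : (LCyl Γ L).Countable := by
    refine (Set.countable_range fun p : (F : Finset Γ) × (F → L) =>
      Finset.restrict (π := fun _ => L) p.1 ⁻¹' {p.2}).mono ?_
    rintro _ ⟨F, j, rfl⟩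
    exact ⟨⟨F, F.restrict j⟩, by ext g; simp [funext_iff, Finset.restrict]⟩
  obtain ⟨AL, hAL⟩ :=
    hcount.exists_eq_range ⟨_, restrict_preimage_singleton_mem_LCyl ∅ isEmptyElim⟩
  exact ⟨AL, fun i => hAL ▸ Set.mem_range_self i, fun C hC => (hAL ▸ hC : C ∈ Set.range AL)⟩

variable [Fintype L] [Nonempty L] [MeasurableSpace L] [MeasurableSingletonClass L]
  {AL : ℕ → Set (Γ → L)}

lemma exists_abs_toReal_measure_restrict_preimage_sub_le (hAL : Enumerates AL (LCyl Γ L))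
    (F : Finset Γ) (D : Set (F → L)) :
    ∃ C, 0 ≤ C ∧ ∀ (m m' : Measure (Γ → L)) [IsProbabilityMeasure m] [IsProbabilityMeasure m'],
      |(m (F.restrict ⁻¹' D)).toReal - (m' (F.restrict ⁻¹' D)).toReal| ≤
        C * deltaEnum AL m m' := by
  classical
  choose k hk using fun j : F → L => hAL.2 _ (restrict_preimage_singleton_mem_LCyl F j)
  refine ⟨∑ j, 2 ^ (k j + 1), by positivity, fun m m' _ _ => ?_⟩
  have hsum : ∀ (ν : Measure (Γ → L)) [IsFiniteMeasure ν],
      (ν (F.restrict ⁻¹' D)).toReal = ∑ j ∈ D.toFinset, (ν (AL (k j))).toReal := by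
    intro ν _
    simp_rw [hk]
    rw [← ENNReal.toReal_sum fun _ _ => measure_ne_top ν _, sum_measure_preimage_singleton _
      fun j _ => Finset.measurable_restrict (X := fun _ => L) F (measurableSet_singleton j),
      Set.coe_toFinset]
  rw [hsum m, hsum m', ← Finset.sum_sub_distrib, Finset.sum_mul]
  calc |∑ j ∈ D.toFinset, ((m (AL (k j))).toReal - (m' (AL (k j))).toReal)|
      ≤ ∑ j ∈ D.toFinset, |(m (AL (k j))).toReal - (m' (AL (k j))).toReal| :=
        Finset.abs_sum_le_sum_abs _ _
    _ ≤ ∑ j ∈ D.toFinset, 2 ^ (k j + 1) * deltaEnum AL m m' :=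
        Finset.sum_le_sum fun j _ => abs_toReal_measure_sub_le_deltaEnum AL m m' (k j)
    _ ≤ ∑ j, 2 ^ (k j + 1) * deltaEnum AL m m' :=
        Finset.sum_le_sum_of_subset_of_nonneg (Finset.subset_univ _)
          fun _ _ _ => mul_nonneg (by positivity) (deltaEnum_nonneg AL m m')

lemma exists_abs_toReal_measure_preimage_sub_le (hAL : Enumerates AL (LCyl Γ L))
    {M : Type*} [MeasurableSpace M] {P : M → Γ → L} (hP : Measurable P)
    (F : Finset Γ) (D : Set (F → L)) :
    ∃ C, 0 ≤ C ∧ ∀ (ν ν' : Measure M) [IsProbabilityMeasure ν] [IsProbabilityMeasure ν'],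
      |(ν ((F.restrict ∘ P) ⁻¹' D)).toReal - (ν' ((F.restrict ∘ P) ⁻¹' D)).toReal| ≤
        C * deltaEnum AL (ν.map P) (ν'.map P) := by
  obtain ⟨C, hC0, hC⟩ := exists_abs_toReal_measure_restrict_preimage_sub_le hAL F D
  refine ⟨C, hC0, fun ν ν' _ _ => ?_⟩
  have hD : MeasurableSet (F.restrict ⁻¹' D : Set (Γ → L)) :=
    Finset.measurable_restrict F D.toFinite.measurableSet
  have := Measure.isProbabilityMeasure_map (μ := ν) hP.aemeasurable
  have := Measure.isProbabilityMeasure_map (μ := ν') hP.aemeasurable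
  rw [Set.preimage_comp, ← Measure.map_apply hP hD, ← Measure.map_apply hP hD]
  exact hC _ _

lemma exists_deltaEnum_le_mul_deltaEnum_map_add (hAL : Enumerates AL (LCyl Γ L))
    {M : Type*} [MeasurableSpace M] {A : ℕ → Set M} {P : M → Γ → L} (hP : Measurable P) {N : ℕ}
    (hA : ∀ i < N, ∃ (F : Finset Γ) (D : Set (F → L)), A i = (F.restrict ∘ P) ⁻¹' D) :
    ∃ C, 0 ≤ C ∧ ∀ (ν ν' : Measure M) [IsProbabilityMeasure ν] [IsProbabilityMeasure ν'],
      deltaEnum A ν ν' ≤ C * deltaEnum AL (ν.map P) (ν'.map P) + 2⁻¹ ^ N := by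
  choose F D hFD using fun i : Fin N => hA i i.2
  choose C hC0 hC using fun i : Fin N =>
    exists_abs_toReal_measure_preimage_sub_le hAL hP (F i) (D i)
  refine ⟨∑ i, C i, Finset.sum_nonneg fun i _ => hC0 i, fun ν ν' _ _ => ?_⟩
  calc deltaEnum A ν ν'
      ≤ ∑ i ∈ Finset.range N, |(ν (A i)).toReal - (ν' (A i)).toReal| + 2⁻¹ ^ N :=
        deltaEnum_le_sum_range_add A ν ν' N
    _ = ∑ i : Fin N, |(ν (A i)).toReal - (ν' (A i)).toReal| + 2⁻¹ ^ N := by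
        rw [Fin.sum_univ_eq_sum_range (fun i => |(ν (A i)).toReal - (ν' (A i)).toReal|)]
    _ ≤ (∑ i, C i) * deltaEnum AL (ν.map P) (ν'.map P) + 2⁻¹ ^ N := by
        rw [Finset.sum_mul]
        gcongr with i
        rw [hFD i]
        exact hC i ν ν'

end LCyl

section CantorTrunc

-- Encoded in `Fin m`, the form in which the hypothesis speaks about finite alphabets.
noncomputable def cantorTrunc (s : Finset ℕ) (x : Cantor) : Fin (Fintype.card (s → Bool)) :=
  Fintype.equivFin _ (s.restrict x)

noncomputable def cantorExtend (s : Finset ℕ) (v : Fin (Fintype.card (s → Bool))) : Cantor :=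
  fun n => if h : n ∈ s then (Fintype.equivFin _).symm v ⟨n, h⟩ else false

variable (s : Finset ℕ)

lemma cantorTrunc_cantorExtend (v : Fin (Fintype.card (s → Bool))) :
    cantorTrunc s (cantorExtend s v) = v := by
  have : s.restrict (cantorExtend s v) = (Fintype.equivFin _).symm v := by
    ext ⟨n, hn⟩
    simp [cantorExtend, hn]
  rw [cantorTrunc, this, Equiv.apply_symm_apply]

lemma cantorExtend_cantorTrunc_apply (x : Cantor) {n : ℕ} (hn : n ∈ s) :
    cantorExtend s (cantorTrunc s x) n = x n := by
  simp [cantorExtend, cantorTrunc, hn, Finset.restrict]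

lemma measurable_cantorTrunc : Measurable (cantorTrunc s) :=
  measurable_of_countable _ |>.comp (Finset.measurable_restrict s)

lemma measurable_cantorExtend : Measurable (cantorExtend s) :=
  .of_discrete

end CantorTrunc

lemma exists_finset_mem_iff_of_mem_cantorBasic {B : Set Cantor} (hB : B ∈ cantorBasic) :
    ∃ s₀ : Finset ℕ, ∀ x y : Cantor, (∀ n ∈ s₀, x n = y n) → (x ∈ B ↔ y ∈ B) := by
  obtain ⟨s₀, σ, rfl⟩ := hB
  exact ⟨s₀, fun x y hxy => forall₂_congr fun n hn => by rw [hxy n hn]⟩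

lemma exists_finset_eq_preimage_cantorTrunc {Γ : Type*} {C : Set (Γ → Cantor)}
    (hC : C ∈ KCyl Γ) : ∃ s₀ : Finset ℕ, ∀ s, s₀ ⊆ s →
      ∃ (F : Finset Γ) (D : Set (F → Fin (Fintype.card (s → Bool)))),
        C = (F.restrict ∘ (cantorTrunc s ∘ ·)) ⁻¹' D := by
  classical
  obtain ⟨F, B, hB, rfl⟩ := hC
  choose s₀ hs₀ using fun γ : F => exists_finset_mem_iff_of_mem_cantorBasic (hB γ γ.2)
  refine ⟨F.attach.biUnion s₀, fun s hs => ⟨F, {j | ∀ γ : F, cantorExtend s (j γ) ∈ B γ}, ?_⟩⟩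
  ext f
  simp only [Set.mem_ofPred_eq, Set.mem_preimage, Function.comp_apply, Finset.restrict]
  refine ⟨fun hf γ => ?_, fun hf γ hγ => ?_⟩
  · refine (hs₀ γ _ _ fun n hn => ?_).1 (hf γ γ.2)
    exact (cantorExtend_cantorTrunc_apply s _
      (hs (Finset.mem_biUnion.2 ⟨γ, F.mem_attach γ, hn⟩))).symm
  · refine (hs₀ ⟨γ, hγ⟩ _ _ fun n hn => ?_).1 (hf ⟨γ, hγ⟩)
    exact cantorExtend_cantorTrunc_apply s _ (hs (Finset.mem_biUnion.2 ⟨_, F.mem_attach _, hn⟩))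

namespace MPAction

variable {Γ : Type*} [Group Γ] {X : Type*} [MeasurableSpace X] {μ : Measure X}
  (a : MPAction Γ X μ) {S T : Type*} [MeasurableSpace S] [MeasurableSpace T]

lemma measurable_phiMap_s10 {φ : X → S} (hφ : Measurable φ) : Measurable (a.phiMap φ) :=
  measurable_pi_lambda _ fun γ => hφ.comp (a.measurePreserving_act γ⁻¹).measurable

lemma isProbabilityMeasure_of_mem_ESet [IsProbabilityMeasure μ] {m : Measure (Γ → S)}
    (hm : m ∈ a.ESet S) : IsProbabilityMeasure m := by
  obtain ⟨φ, hφ, rfl⟩ := hm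
  exact Measure.isProbabilityMeasure_map (a.measurable_phiMap_s10 hφ).aemeasurable

lemma image_map_comp_ESet {π : S → T} {ι : T → S} (hπ : Measurable π) (hι : Measurable ι)
    (hπι : Function.LeftInverse π ι) :
    (fun m => m.map (π ∘ ·)) '' a.ESet S = a.ESet T := by
  have hπ' : Measurable fun f : Γ → S => π ∘ f :=
    measurable_pi_lambda _ fun γ => hπ.comp (measurable_pi_apply γ)
  have hmap : ∀ {φ : X → S}, Measurable φ →
      (μ.map (a.phiMap φ)).map (π ∘ ·) = μ.map (a.phiMap (π ∘ φ)) := fun hφ =>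
    Measure.map_map hπ' (a.measurable_phiMap_s10 hφ)
  ext m
  constructor
  · rintro ⟨_, ⟨φ, hφ, rfl⟩, rfl⟩
    exact ⟨π ∘ φ, hπ.comp hφ, hmap hφ⟩
  · rintro ⟨ψ, hψ, rfl⟩
    refine ⟨_, ⟨ι ∘ ψ, hι.comp hψ, rfl⟩, ?_⟩
    dsimp only
    rw [hmap (hι.comp hψ), ← Function.comp_assoc, hπι.comp_eq_id, Function.id_comp]

end MPAction

lemma HausTendsto.exists_forall_ge_of_image {M M' : Type*} [MeasurableSpace M]
    [MeasurableSpace M'] {δ : Measure M → Measure M → ℝ} {δ' : Measure M' → Measure M' → ℝ}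
    {En : ℕ → Set (Measure M)} {E : Set (Measure M)} {En' : ℕ → Set (Measure M')}
    {E' : Set (Measure M')} (h : HausTendsto δ' En' E') (Q : Measure M → Measure M')
    (hEn : ∀ n, Q '' En n = En' n) (hE : Q '' E = E') {ε η : ℝ} (hη : 0 < η)
    (hQ : ∀ n, ∀ m ∈ En n, ∀ m' ∈ E, δ' (Q m) (Q m') < η → δ m m' < ε) :
    ∃ N, ∀ n ≥ N, (∀ m ∈ En n, ∃ m' ∈ E, δ m m' < ε) ∧ (∀ m' ∈ E, ∃ m ∈ En n, δ m m' < ε) := by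
  obtain rfl : En' = fun n => Q '' En n := funext fun n => (hEn n).symm
  subst hE
  obtain ⟨N, hN⟩ := h η hη
  refine ⟨N, fun n hn => ⟨fun m hm => ?_, fun m' hm' => ?_⟩⟩
  · obtain ⟨_, ⟨m', hm', rfl⟩, hlt⟩ := (hN n hn).1 (Q m) (Set.mem_image_of_mem Q hm)
    exact ⟨m', hm', hQ n m hm m' hm' hlt⟩
  · obtain ⟨_, ⟨m, hm, rfl⟩, hlt⟩ := (hN n hn).2 (Q m') (Set.mem_image_of_mem Q hm')
    exact ⟨m, hm, hQ n m hm m' hm' hlt⟩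

theorem ESet_cantor_hausdorff_tendsto_of_finite_general
    (Γ : Type) [Group Γ] [Countable Γ]
    (X : Type) [MeasurableSpace X]
    (μ : Measure X) [IsProbabilityMeasure μ]
    (A : ℕ → Set (Γ → Cantor)) (hA : Enumerates A (KCyl Γ))
    (a : ℕ → MPAction Γ X μ) (b : MPAction Γ X μ)
    (h : ∀ (m : ℕ) (AL : ℕ → Set (Γ → Fin m)), Enumerates AL (LCyl Γ (Fin m)) →
      HausTendsto (deltaEnum AL) (fun n => (a n).ESet (Fin m)) (b.ESet (Fin m))) :
    HausTendsto (deltaEnum A) (fun n => (a n).ESet Cantor) (b.ESet Cantor) := by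
  intro ε hε
  obtain ⟨N, hN⟩ : ∃ N : ℕ, (2 : ℝ)⁻¹ ^ N < ε / 2 :=
    exists_pow_lt_of_lt_one (by positivity) (by norm_num)
  choose s₀ hs₀ using fun i => exists_finset_eq_preimage_cantorTrunc (hA.1 i)
  set s := (Finset.range N).biUnion s₀
  have : Nonempty (Fin (Fintype.card (s → Bool))) := ⟨⟨0, Fintype.card_pos⟩⟩
  obtain ⟨AL, hAL⟩ := exists_enumerates_LCyl (Γ := Γ) (L := Fin (Fintype.card (s → Bool)))
  have hP : Measurable fun f : Γ → Cantor => cantorTrunc s ∘ f :=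
    measurable_pi_lambda _ fun γ => (measurable_cantorTrunc s).comp (measurable_pi_apply γ)
  obtain ⟨C, hC0, hC⟩ := exists_deltaEnum_le_mul_deltaEnum_map_add hAL hP (N := N)
    fun i hi => hs₀ i s (Finset.subset_biUnion_of_mem s₀ (Finset.mem_range.2 hi))
  have hQ := fun c : MPAction Γ X μ => c.image_map_comp_ESet (measurable_cantorTrunc s)
    (measurable_cantorExtend s) (cantorTrunc_cantorExtend s)
  refine (h _ AL hAL).exists_forall_ge_of_image _ (fun n => hQ (a n)) (hQ b)
    (η := ε / 2 / (C + 1)) (by positivity) fun n m hm m' hm' hlt => ?_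
  have := (a n).isProbabilityMeasure_of_mem_ESet hm
  have := b.isProbabilityMeasure_of_mem_ESet hm'
  have hCδ :
      C * deltaEnum AL (m.map (cantorTrunc s ∘ ·)) (m'.map (cantorTrunc s ∘ ·)) < ε / 2 := by
    calc _ ≤ C * (ε / 2 / (C + 1)) := by gcongr
      _ < ε / 2 := by rw [mul_div_assoc']; exact (div_lt_iff₀ (by positivity)).2 (by nlinarith)
  linarith [hC m m']

/-- If for every finite set `L` (modelled as `Fin m`) the closures of
`E(a_n,L)` converge to the closure of `E(a,L)` in the hyperspace of compact subsets of
`M_s(L^Γ)` (with the Hausdorff metric built, as usual, from an enumeration of the cylinder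
sets of `L^Γ`), then the closures of `E(a_n,K)` converge to the closure of `E(a,K)` in the
hyperspace of compact subsets of `M_s(K^Γ)`, where `K` is the Cantor set. -/
theorem ESet_cantor_hausdorff_tendsto_of_finite
    (Γ : Type) [Group Γ] [Countable Γ]
    (X : Type) [MeasurableSpace X] [StandardBorelSpace X]
    (μ : Measure X) [IsProbabilityMeasure μ] [NullSingletonClass μ]
    (A : ℕ → Set (Γ → Cantor)) (hA : Enumerates A (KCyl Γ))
    (a : ℕ → MPAction Γ X μ) (b : MPAction Γ X μ)
    (h : ∀ (m : ℕ) (AL : ℕ → Set (Γ → Fin m)), Enumerates AL (LCyl Γ (Fin m)) →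
      HausTendsto (deltaEnum AL) (fun n => (a n).ESet (Fin m)) (b.ESet (Fin m))) :
    HausTendsto (deltaEnum A) (fun n => (a n).ESet Cantor) (b.ESet Cantor) :=
  ESet_cantor_hausdorff_tendsto_of_finite_general Γ X μ A hA a b h
end

section
/- Let Γ be a countable discrete group and (X,μ) a standard probability space. The convex combination operation on A_∼(Γ,X,μ) is jointly continuous: if t_j → t in [0,1] and a_j, b_j, a, b are measure-preserving actions of Γ on (X,μ) with d(a_j,a) → 0 and d(b_j,b) → 0, then d(t_j a_j + (1−t_j) b_j, t a + (1−t) b) → 0. Hence A_∼(Γ,X,μ) is a topological weak convex space. -/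
open MeasureTheory Filter Topology Set

/-!
Before closures are taken, the matrices `(μ(γ_p A_q ∩ A_r))` of partitions of `X ⊔ X` under
`t a + (1 - t) b` are exactly the combinations `t v + (1 - t) w` of matrices `v` of `a` and `w`
of `b`: restrict a partition to the two copies of `X`, or conversely glue two partitions. All
these matrices lie in the unit ball, so moving `v, w, t` to `v', w', t'` moves the combination
by at most `‖v - v'‖ + ‖w - w'‖ + 2 |t - t'|`. Hence each Hausdorff distance between the sets
`C_{n,k}` of the combinations is at most the sum of those for `a` and for `b` plus `2 |t - t'|`,
and summing with the weights `2^{-(n+k)}`, of total mass `4`, gives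
`d(t a + (1 - t) b, t' a' + (1 - t') b') ≤ d(a, a') + d(b, b') + 8 |t - t'|`.
-/

open Metric

section ConvexCombination

variable {E : Type*} [SeminormedAddCommGroup E] [NormedSpace ℝ E]

theorem norm_convexComb_sub_convexComb_le {t t' : ℝ} (ht' : t' ∈ Icc (0 : ℝ) 1)
    {v w v' w' : E} (hv : ‖v‖ ≤ 1) (hw : ‖w‖ ≤ 1) :
    ‖(t • v + (1 - t) • w) - (t' • v' + (1 - t') • w')‖
      ≤ ‖v - v'‖ + ‖w - w'‖ + 2 * |t - t'| := by
  have hsplit : (t • v + (1 - t) • w) - (t' • v' + (1 - t') • w')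
      = t' • (v - v') + (1 - t') • (w - w') + (t - t') • (v - w) := by module
  have h₁ : ‖t' • (v - v')‖ ≤ ‖v - v'‖ := by
    rw [norm_smul, Real.norm_of_nonneg ht'.1]
    exact mul_le_of_le_one_left (norm_nonneg _) ht'.2
  have h₂ : ‖(1 - t') • (w - w')‖ ≤ ‖w - w'‖ := by
    rw [norm_smul, Real.norm_of_nonneg (sub_nonneg.2 ht'.2)]
    exact mul_le_of_le_one_left (norm_nonneg _) (by linarith [ht'.1])
  have h₃ : ‖(t - t') • (v - w)‖ ≤ 2 * |t - t'| := by
    rw [norm_smul, Real.norm_eq_abs, mul_comm]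
    exact mul_le_mul_of_nonneg_right ((norm_sub_le v w).trans (by linarith)) (abs_nonneg _)
  rw [hsplit]
  exact (norm_add₃_le).trans (by linarith)

end ConvexCombination

section HausdorffDist

variable {E : Type*} [NormedAddCommGroup E] [NormedSpace ℝ E]

theorem exists_dist_image2_convexComb_le {t t' : ℝ} (ht' : t' ∈ Icc (0 : ℝ) 1)
    {s₁ s₂ s₁' s₂' : Set E} (h₁ : s₁ ⊆ closedBall 0 1) (h₂ : s₂ ⊆ closedBall 0 1)
    (h₁' : s₁' ⊆ closedBall 0 1) (h₂' : s₂' ⊆ closedBall 0 1)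
    (hs₁' : s₁'.Nonempty) (hs₂' : s₂'.Nonempty) {ε : ℝ} (hε : 0 < ε) :
    ∀ x ∈ image2 (fun v w => t • v + (1 - t) • w) s₁ s₂,
      ∃ y ∈ image2 (fun v w => t' • v + (1 - t') • w) s₁' s₂',
        dist x y ≤ hausdorffDist s₁ s₁' + hausdorffDist s₂ s₂' + 2 * |t - t'| + ε := by
  rintro _ ⟨v, hv, w, hw, rfl⟩
  have hfin : ∀ {s s' : Set E}, s ⊆ closedBall 0 1 → s' ⊆ closedBall 0 1 → s.Nonempty →
      s'.Nonempty → hausdorffEDist s s' ≠ ⊤ := fun h h' hs hs' =>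
    hausdorffEDist_ne_top_of_nonempty_of_bounded hs hs'
      (isBounded_closedBall.subset h) (isBounded_closedBall.subset h')
  obtain ⟨v', hv', hvv'⟩ := exists_dist_lt_of_hausdorffDist_lt hv
    (lt_add_of_pos_right (hausdorffDist s₁ s₁') (half_pos hε)) (hfin h₁ h₁' ⟨v, hv⟩ hs₁')
  obtain ⟨w', hw', hww'⟩ := exists_dist_lt_of_hausdorffDist_lt hw
    (lt_add_of_pos_right (hausdorffDist s₂ s₂') (half_pos hε)) (hfin h₂ h₂' ⟨w, hw⟩ hs₂')
  refine ⟨_, mem_image2_of_mem hv' hw', ?_⟩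
  rw [dist_eq_norm] at hvv' hww' ⊢
  refine (norm_convexComb_sub_convexComb_le ht' (mem_closedBall_zero_iff.1 (h₁ hv))
    (mem_closedBall_zero_iff.1 (h₂ hw))).trans ?_
  linarith

theorem hausdorffDist_image2_convexComb_le {t t' : ℝ} (ht : t ∈ Icc (0 : ℝ) 1)
    (ht' : t' ∈ Icc (0 : ℝ) 1) {s₁ s₂ s₁' s₂' : Set E}
    (h₁ : s₁ ⊆ closedBall 0 1) (h₂ : s₂ ⊆ closedBall 0 1)
    (h₁' : s₁' ⊆ closedBall 0 1) (h₂' : s₂' ⊆ closedBall 0 1) :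
    hausdorffDist (image2 (fun v w => t • v + (1 - t) • w) s₁ s₂)
        (image2 (fun v w => t' • v + (1 - t') • w) s₁' s₂')
      ≤ hausdorffDist s₁ s₁' + hausdorffDist s₂ s₂' + 2 * |t - t'| := by
  have hrhs : 0 ≤ hausdorffDist s₁ s₁' + hausdorffDist s₂ s₂' + 2 * |t - t'| :=
    add_nonneg (add_nonneg hausdorffDist_nonneg hausdorffDist_nonneg) (by positivity)
  rcases (image2 (fun v w => t • v + (1 - t) • w) s₁ s₂).eq_empty_or_nonempty with h | h
  · rwa [h, hausdorffDist_empty']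
  rcases (image2 (fun v w => t' • v + (1 - t') • w) s₁' s₂').eq_empty_or_nonempty with h' | h'
  · rwa [h', hausdorffDist_empty]
  obtain ⟨hs₁, hs₂⟩ := image2_nonempty_iff.1 h
  obtain ⟨hs₁', hs₂'⟩ := image2_nonempty_iff.1 h'
  refine le_of_forall_pos_le_add fun ε hε => hausdorffDist_le_of_mem_dist (by positivity)
    (exists_dist_image2_convexComb_le ht' h₁ h₂ h₁' h₂' hs₁' hs₂' hε) fun y hy => ?_
  obtain ⟨x, hx, hyx⟩ := exists_dist_image2_convexComb_le ht h₁' h₂' h₁ h₂ hs₁ hs₂ hε y hy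
  refine ⟨x, hx, ?_⟩
  rwa [hausdorffDist_comm, hausdorffDist_comm (s := s₂'), abs_sub_comm] at hyx

end HausdorffDist

theorem Metric.hausdorffDist_le_of_subset_closedBall {α : Type*} [PseudoMetricSpace α]
    {s t : Set α} {x : α} {r : ℝ} (hr : 0 ≤ r) (hs : s ⊆ closedBall x r)
    (ht : t ⊆ closedBall x r) : hausdorffDist s t ≤ 2 * r := by
  rcases s.eq_empty_or_nonempty with rfl | hs'
  · rw [hausdorffDist_empty']; positivity
  rcases t.eq_empty_or_nonempty with rfl | ht'
  · rw [hausdorffDist_empty]; positivity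
  calc hausdorffDist s t
      ≤ diam (s ∪ t) := hausdorffDist_le_diam hs' (isBounded_closedBall.subset hs) ht'
        (isBounded_closedBall.subset ht)
    _ ≤ diam (closedBall x r) := diam_mono (union_subset hs ht) isBounded_closedBall
    _ ≤ 2 * r := diam_closedBall hr

theorem two_zpow_neg_sub (n k : ℕ) :
    (2 : ℝ) ^ (-(n : ℤ) - (k : ℤ)) = (1 / 2 : ℝ) ^ n * (1 / 2 : ℝ) ^ k := by
  rw [sub_eq_add_neg, zpow_add₀ two_ne_zero, zpow_neg, zpow_neg, zpow_natCast, zpow_natCast,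
    one_div, inv_pow, inv_pow]

theorem summable_two_zpow_neg_sub :
    Summable fun nk : ℕ × ℕ => (2 : ℝ) ^ (-(nk.1 : ℤ) - (nk.2 : ℤ)) := by
  simp only [two_zpow_neg_sub]
  exact summable_mul_of_summable_norm (f := fun n : ℕ => (1 / 2 : ℝ) ^ n)
    (g := fun n : ℕ => (1 / 2 : ℝ) ^ n) (by simpa using summable_geometric_two)
    (by simpa using summable_geometric_two)

theorem tsum_two_zpow_neg_sub :
    ∑' nk : ℕ × ℕ, (2 : ℝ) ^ (-(nk.1 : ℤ) - (nk.2 : ℤ)) = 4 := by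
  simp only [two_zpow_neg_sub]
  rw [← tsum_mul_tsum_of_summable_norm (f := fun n : ℕ => (1 / 2 : ℝ) ^ n)
    (g := fun n : ℕ => (1 / 2 : ℝ) ^ n) (by simpa using summable_geometric_two)
    (by simpa using summable_geometric_two), tsum_geometric_two]
  norm_num

theorem tsum_mul_le_add_add {ι : Type*} {w f g h : ι → ℝ} {c : ℝ} (hw : ∀ i, 0 ≤ w i)
    (hf : ∀ i, 0 ≤ f i) (hg : Summable fun i => w i * g i) (hh : Summable fun i => w i * h i)
    (hW : Summable w) (hle : ∀ i, f i ≤ g i + h i + c) :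
    ∑' i, w i * f i ≤ ∑' i, w i * g i + ∑' i, w i * h i + (∑' i, w i) * c := by
  have hs : Summable fun i => w i * g i + w i * h i + w i * c := (hg.add hh).add (hW.mul_right c)
  have hterm : ∀ i, w i * f i ≤ w i * g i + w i * h i + w i * c := fun i => by
    rw [← mul_add, ← mul_add]
    exact mul_le_mul_of_nonneg_left (hle i) (hw i)
  calc ∑' i, w i * f i
      ≤ ∑' i, (w i * g i + w i * h i + w i * c) :=
        Summable.tsum_le_tsum hterm
          (hs.of_nonneg_of_le (fun i => mul_nonneg (hw i) (hf i)) hterm) hs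
    _ = ∑' i, w i * g i + ∑' i, w i * h i + (∑' i, w i) * c := by
        rw [Summable.tsum_add (hg.add hh) (hW.mul_right c), Summable.tsum_add hg hh, tsum_mul_right]

namespace MPAction

variable {Γ : Type*} [Group Γ] {X : Type*} [MeasurableSpace X] {μ : Measure X}

theorem image_act_eq_preimage (a : MPAction Γ X μ) (γ : Γ) (s : Set X) :
    a.act γ '' s = a.act γ⁻¹ ⁻¹' s :=
  congrFun (image_eq_preimage_of_inverse
    (fun x => by rw [← a.act_mul, inv_mul_cancel, a.act_one])
    (fun x => by rw [← a.act_mul, mul_inv_cancel, a.act_one])) s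

theorem measurableSet_image_act (a : MPAction Γ X μ) (γ : Γ) {s : Set X}
    (hs : MeasurableSet s) : MeasurableSet (a.act γ '' s) := by
  rw [image_act_eq_preimage]
  exact (a.measurePreserving_act γ⁻¹).measurable hs

section Sigma

variable {ι : Type*} {Z : ι → Type*} [∀ i, MeasurableSpace (Z i)]

theorem measurableSet_of_sigma {s : Set ((i : ι) × Z i)}
    (h : ∀ i, MeasurableSet (Sigma.mk i ⁻¹' s)) : MeasurableSet s := by
  rw [Sigma.instMeasurableSpace, MeasurableSpace.measurableSet_iInf]
  exact h

theorem mixMeasure_apply (lam : ι → ℝ) (νs : ∀ i, Measure (Z i)) {s : Set ((i : ι) × Z i)}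
    (hs : MeasurableSet s) :
    mixMeasure lam νs s = ∑' i, ENNReal.ofReal (lam i) * νs i (Sigma.mk i ⁻¹' s) := by
  simp only [mixMeasure, Measure.sum_apply _ hs, Measure.smul_apply, smul_eq_mul,
    Measure.map_apply (measurable_sigmaMk' _) hs]

theorem preimage_sigmaMk_image_mix_act [Countable ι] {νs : ∀ i, Measure (Z i)} (lam : ι → ℝ)
    (a : ∀ i, MPAction Γ (Z i) (νs i)) (γ : Γ) (i : ι) (s : Set ((i : ι) × Z i)) :
    Sigma.mk i ⁻¹' ((mix lam a).act γ '' s) = (a i).act γ '' (Sigma.mk i ⁻¹' s) := by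
  rw [image_act_eq_preimage, image_act_eq_preimage]
  rfl

theorem IsPartition.preimage {Y : Type*} [MeasurableSpace Y] {k : ℕ} {A : Fin k → Set X}
    (hA : IsPartition A) {f : Y → X} (hf : Measurable f) : IsPartition fun q => f ⁻¹' A q :=
  ⟨fun q => hf (hA.1 q), fun _ _ hqr => (hA.2.1 hqr).preimage f,
    by rw [← preimage_iUnion, hA.2.2, preimage_univ]⟩

theorem IsPartition.sigma {k : ℕ} {A : ∀ i, Fin k → Set (Z i)} (hA : ∀ i, IsPartition (A i)) :
    IsPartition fun q => {p : (i : ι) × Z i | p.2 ∈ A p.1 q} := by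
  refine ⟨fun q => measurableSet_of_sigma fun i => (hA i).1 q, ?_, ?_⟩
  · intro q r hqr
    exact Set.disjoint_left.2 fun p hq hr => Set.disjoint_left.1 ((hA p.1).2.1 hqr) hq hr
  · refine eq_univ_of_forall fun p => ?_
    have hp : p.2 ∈ ⋃ q, A p.1 q := (hA p.1).2.2 ▸ mem_univ p.2
    simpa only [mem_iUnion, mem_ofPred_eq] using hp

end Sigma

theorem toReal_mixMeasure_two [IsFiniteMeasure μ] {t : ℝ} (ht : t ∈ Icc (0 : ℝ) 1)
    {s : Set ((_ : Fin 2) × X)} (hs : MeasurableSet s) :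
    ((mixMeasure ![t, 1 - t] fun _ => μ) s).toReal
      = t * (μ (Sigma.mk (β := fun _ => X) 0 ⁻¹' s)).toReal
        + (1 - t) * (μ (Sigma.mk (β := fun _ => X) 1 ⁻¹' s)).toReal := by
  rw [mixMeasure_apply _ _ hs, tsum_fintype, Fin.sum_univ_two,
    ENNReal.toReal_add (by finiteness) (by finiteness), ENNReal.toReal_mul, ENNReal.toReal_mul,
    Matrix.cons_val_zero, Matrix.cons_val_one, Matrix.cons_val_fin_one,
    ENNReal.toReal_ofReal ht.1, ENNReal.toReal_ofReal (sub_nonneg.2 ht.2)]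

def partitionMatrix (e : ℕ → Γ) (a : MPAction Γ X μ) (n : ℕ) {k : ℕ} (A : Fin k → Set X) :
    Fin n × Fin k × Fin k → ℝ :=
  fun c => (μ (a.act (e c.1) '' A c.2.1 ∩ A c.2.2)).toReal

theorem Cnk_eq_closure_image (e : ℕ → Γ) (a : MPAction Γ X μ) (n k : ℕ) :
    Cnk e a n k = closure (partitionMatrix e a n '' {A | IsPartition A}) := by
  simp only [Cnk, partitionMatrix, image, mem_ofPred_eq, funext_iff, Prod.forall, eq_comm]

theorem partitionMatrix_mem_closedBall [IsProbabilityMeasure μ] (e : ℕ → Γ)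
    (a : MPAction Γ X μ) (n : ℕ) {k : ℕ} (A : Fin k → Set X) :
    partitionMatrix e a n A ∈ closedBall 0 1 := by
  rw [mem_closedBall_zero_iff, pi_norm_le_iff_of_nonneg zero_le_one]
  intro c
  rw [partitionMatrix, Real.norm_of_nonneg ENNReal.toReal_nonneg]
  exact measureReal_le_one

theorem Cnk_subset_closedBall [IsProbabilityMeasure μ] (e : ℕ → Γ) (a : MPAction Γ X μ)
    (n k : ℕ) : Cnk e a n k ⊆ closedBall 0 1 := by
  rw [Cnk_eq_closure_image]
  exact closure_minimal (image_subset_iff.2 fun A _ => partitionMatrix_mem_closedBall e a n A)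
    isClosed_closedBall

theorem partitionMatrix_convComb [IsFiniteMeasure μ] {t : ℝ} (ht : t ∈ Icc (0 : ℝ) 1)
    (e : ℕ → Γ) (a b : MPAction Γ X μ) (n : ℕ) {k : ℕ} {C : Fin k → Set ((_ : Fin 2) × X)}
    (hC : ∀ q, MeasurableSet (C q)) :
    partitionMatrix e (convComb t a b) n C
      = t • partitionMatrix e a n (fun q => Sigma.mk (β := fun _ => X) 0 ⁻¹' C q)
        + (1 - t) • partitionMatrix e b n (fun q => Sigma.mk (β := fun _ => X) 1 ⁻¹' C q) := by
  funext c
  simp only [partitionMatrix, Pi.add_apply, Pi.smul_apply, smul_eq_mul]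
  rw [toReal_mixMeasure_two ht ((measurableSet_image_act _ _ (hC _)).inter (hC _))]
  simp only [preimage_inter, convComb, preimage_sigmaMk_image_mix_act, Matrix.cons_val_zero,
    Matrix.cons_val_one, Matrix.cons_val_fin_one]

theorem image_partitionMatrix_convComb [IsFiniteMeasure μ] {t : ℝ} (ht : t ∈ Icc (0 : ℝ) 1)
    (e : ℕ → Γ) (a b : MPAction Γ X μ) (n k : ℕ) :
    partitionMatrix e (convComb t a b) n '' {C : Fin k → Set _ | IsPartition C}
      = image2 (fun v w => t • v + (1 - t) • w)
          (partitionMatrix e a n '' {A | IsPartition A})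
          (partitionMatrix e b n '' {B | IsPartition B}) := by
  ext u
  constructor
  · rintro ⟨C, hC, rfl⟩
    rw [partitionMatrix_convComb ht e a b n hC.1]
    exact mem_image2_of_mem (mem_image_of_mem _ (hC.preimage (measurable_sigmaMk' 0)))
      (mem_image_of_mem _ (hC.preimage (measurable_sigmaMk' 1)))
  · rintro ⟨_, ⟨A, hA, rfl⟩, _, ⟨B, hB, rfl⟩, rfl⟩
    have hAB : IsPartition fun q => {p : (_ : Fin 2) × X | p.2 ∈ ![A, B] p.1 q} :=
      IsPartition.sigma (Z := fun _ => X) fun i => by fin_cases i <;> assumption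
    exact ⟨_, hAB, partitionMatrix_convComb ht e a b n hAB.1⟩

theorem hausdorffDist_Cnk_convComb_le [IsProbabilityMeasure μ] {t t' : ℝ}
    (ht : t ∈ Icc (0 : ℝ) 1) (ht' : t' ∈ Icc (0 : ℝ) 1) (e : ℕ → Γ) (a b a' b' : MPAction Γ X μ)
    (n k : ℕ) :
    hausdorffDist (Cnk e (convComb t a b) n k) (Cnk e (convComb t' a' b') n k)
      ≤ hausdorffDist (Cnk e a n k) (Cnk e a' n k) + hausdorffDist (Cnk e b n k) (Cnk e b' n k)
        + 2 * |t - t'| := by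
  have hball : ∀ c : MPAction Γ X μ, partitionMatrix e c n '' {A : Fin k → Set X | IsPartition A}
      ⊆ closedBall 0 1 := fun c =>
    image_subset_iff.2 fun A _ => partitionMatrix_mem_closedBall e c n A
  simp only [Cnk_eq_closure_image, hausdorffDist_closure, image_partitionMatrix_convComb ht,
    image_partitionMatrix_convComb ht']
  exact hausdorffDist_image2_convexComb_le ht ht' (hball a) (hball b) (hball a') (hball b')

variable {Y : Type*} [MeasurableSpace Y] {ν : Measure Y}

theorem dWE_nonneg (e : ℕ → Γ) (a : MPAction Γ X μ) (b : MPAction Γ Y ν) : 0 ≤ dWE e a b :=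
  tsum_nonneg fun _ => mul_nonneg (by positivity) hausdorffDist_nonneg

theorem summable_dWE [IsProbabilityMeasure μ] [IsProbabilityMeasure ν] (e : ℕ → Γ)
    (a : MPAction Γ X μ) (b : MPAction Γ Y ν) :
    Summable fun nk : ℕ × ℕ => (2 : ℝ) ^ (-(nk.1 : ℤ) - (nk.2 : ℤ)) *
      hausdorffDist (Cnk e a nk.1 nk.2) (Cnk e b nk.1 nk.2) :=
  (summable_two_zpow_neg_sub.mul_right 2).of_nonneg_of_le
    (fun _ => mul_nonneg (by positivity) hausdorffDist_nonneg)
    fun nk => mul_le_mul_of_nonneg_left ((hausdorffDist_le_of_subset_closedBall zero_le_one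
      (Cnk_subset_closedBall e a nk.1 nk.2) (Cnk_subset_closedBall e b nk.1 nk.2)).trans_eq
        (mul_one 2)) (by positivity)

theorem dWE_convComb_le [IsProbabilityMeasure μ] {t t' : ℝ}
    (ht : t ∈ Icc (0 : ℝ) 1) (ht' : t' ∈ Icc (0 : ℝ) 1) (e : ℕ → Γ) (a b a' b' : MPAction Γ X μ) :
    dWE e (convComb t a b) (convComb t' a' b') ≤ dWE e a a' + dWE e b b' + 8 * |t - t'| :=
  calc dWE e (convComb t a b) (convComb t' a' b')
      ≤ dWE e a a' + dWE e b b'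
        + (∑' nk : ℕ × ℕ, (2 : ℝ) ^ (-(nk.1 : ℤ) - (nk.2 : ℤ))) * (2 * |t - t'|) :=
        tsum_mul_le_add_add (fun _ => by positivity) (fun _ => hausdorffDist_nonneg)
          (summable_dWE e a a') (summable_dWE e b b') summable_two_zpow_neg_sub
          fun nk => hausdorffDist_Cnk_convComb_le ht ht' e a b a' b' nk.1 nk.2
    _ = dWE e a a' + dWE e b b' + 8 * |t - t'| := by rw [tsum_two_zpow_neg_sub]; ring

end MPAction

theorem convComb_continuous_general
    (Γ : Type) [Group Γ]
    (X : Type) [MeasurableSpace X]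
    (μ : Measure X) [IsProbabilityMeasure μ]
    (e : ℕ → Γ)
    (t : ℕ → ℝ) (t₀ : ℝ) (htmem : ∀ j, t j ∈ Set.Icc (0:ℝ) 1) (ht₀ : t₀ ∈ Set.Icc (0:ℝ) 1)
    (htlim : Filter.Tendsto t Filter.atTop (nhds t₀))
    (a : ℕ → MPAction Γ X μ) (a₀ : MPAction Γ X μ)
    (ha : Filter.Tendsto (fun j => MPAction.dWE e (a j) a₀) Filter.atTop (nhds 0))
    (b : ℕ → MPAction Γ X μ) (b₀ : MPAction Γ X μ)
    (hb : Filter.Tendsto (fun j => MPAction.dWE e (b j) b₀) Filter.atTop (nhds 0)) :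
    Filter.Tendsto
      (fun j => MPAction.dWE e (MPAction.convComb (t j) (a j) (b j))
        (MPAction.convComb t₀ a₀ b₀)) Filter.atTop (nhds 0) := by
  have ht : Tendsto (fun j => 8 * |t j - t₀|) atTop (𝓝 0) := by
    simpa using ((htlim.sub_const t₀).abs).const_mul 8
  refine squeeze_zero (fun j => MPAction.dWE_nonneg e _ _)
    (fun j => MPAction.dWE_convComb_le (htmem j) ht₀ e (a j) (b j) a₀ b₀) ?_
  simpa using (ha.add hb).add ht

/-- The convex combination operation on `A_∼(Γ,X,μ)` is jointly continuous:
if `t_j → t` in `[0,1]`, `d(a_j,a) → 0` and `d(b_j,b) → 0`, then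
`d(t_j a_j + (1−t_j) b_j, t a + (1−t) b) → 0`.  Hence `A_∼(Γ,X,μ)` is a topological weak
convex space. -/
theorem convComb_continuous
    (Γ : Type) [Group Γ] [Countable Γ]
    (X : Type) [MeasurableSpace X] [StandardBorelSpace X]
    (μ : Measure X) [IsProbabilityMeasure μ] [NullSingletonClass μ]
    (e : ℕ → Γ) (he : Function.Surjective e)
    (t : ℕ → ℝ) (t₀ : ℝ) (htmem : ∀ j, t j ∈ Set.Icc (0:ℝ) 1) (ht₀ : t₀ ∈ Set.Icc (0:ℝ) 1)
    (htlim : Filter.Tendsto t Filter.atTop (nhds t₀))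
    (a : ℕ → MPAction Γ X μ) (a₀ : MPAction Γ X μ)
    (ha : Filter.Tendsto (fun j => MPAction.dWE e (a j) a₀) Filter.atTop (nhds 0))
    (b : ℕ → MPAction Γ X μ) (b₀ : MPAction Γ X μ)
    (hb : Filter.Tendsto (fun j => MPAction.dWE e (b j) b₀) Filter.atTop (nhds 0)) :
    Filter.Tendsto
      (fun j => MPAction.dWE e (MPAction.convComb (t j) (a j) (b j))
        (MPAction.convComb t₀ a₀ b₀)) Filter.atTop (nhds 0) :=
  convComb_continuous_general Γ X μ e t t₀ htmem ht₀ htlim a a₀ ha b b₀ hb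
end
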